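/- Let $f : (t_0 - \rho_0, t_0 + \rho_0) \to \mathbb{R}$ be $C^2$ with $f'' \ge \sigma_0 > 0$. Set $\sigma_1 = \min(\sigma_0, 1)$. Let $|v_0 - t_0| < \rho_0/2$ and $0 < \rho \le \rho_0$. Assume $-\sigma_1^2\rho^2/256 < f(v_0) \le 0$ and $f'(v_0) < 0$. Then there exists $v$ with $t_0 - \rho_0 < v_0 - \rho/8 < v \le v_0$ such that $f(v) = 0$. -/

import Mathlib

/-! Since `f'' ≥ σ₀`, the function `f x - σ₀ x² / 2` is convex, so `f` lies above its tangent
parabola at `v₀`. At `v₀ - ρ/8` the negative slope and the curvature term `σ₀ ρ² / 128` lift `f`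
strictly above `0`, as `σ₁² ≤ σ₀` and `f v₀ > -σ₁² ρ² / 256`. The intermediate value theorem on
`[v₀ - ρ/8, v₀]` then gives the zero. -/

open Set

variable {f : ℝ → ℝ} {D : Set ℝ} {σ : ℝ}

theorem hasDerivAt_sub_half_mul_sq {x : ℝ} (hf : DifferentiableAt ℝ f x) :
    HasDerivAt (fun x => f x - σ / 2 * x ^ 2) (deriv f x - σ * x) x := by
  refine (hf.hasDerivAt.fun_sub ((hasDerivAt_pow 2 x).const_mul (σ / 2))).congr_deriv ?_
  push_cast
  ring

theorem convexOn_sub_half_mul_sq_of_le_deriv2 (hD : IsOpen D) (hDc : Convex ℝ D)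
    (hf : DifferentiableOn ℝ f D) (hf' : DifferentiableOn ℝ (deriv f) D)
    (hσ : ∀ x ∈ D, σ ≤ deriv (deriv f) x) :
    ConvexOn ℝ D (fun x => f x - σ / 2 * x ^ 2) := by
  have hderiv x (hx : x ∈ D) :=
    hasDerivAt_sub_half_mul_sq (σ := σ) (hf.differentiableAt (hD.mem_nhds hx))
  have hderiv2 x (hx : x ∈ D) :
      HasDerivAt (fun x => deriv f x - σ * x) (deriv (deriv f) x - σ) x := by
    simpa using ((hf'.differentiableAt (hD.mem_nhds hx)).hasDerivAt).fun_sub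
      ((hasDerivAt_id x).const_mul σ)
  refine convexOn_of_hasDerivWithinAt2_nonneg (f' := fun x => deriv f x - σ * x)
    (f'' := fun x => deriv (deriv f) x - σ) hDc
    (fun x hx => (hderiv x hx).continuousAt.continuousWithinAt) ?_ ?_ ?_ <;> rw [hD.interior_eq]
  · exact fun x hx => (hderiv x hx).hasDerivWithinAt
  · exact fun x hx => (hderiv2 x hx).hasDerivWithinAt
  · exact fun x hx => sub_nonneg.2 (hσ x hx)

theorem add_deriv_mul_add_sq_le_of_le_deriv2 (hD : IsOpen D) (hDc : Convex ℝ D)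
    (hf : DifferentiableOn ℝ f D) (hf' : DifferentiableOn ℝ (deriv f) D)
    (hσ : ∀ x ∈ D, σ ≤ deriv (deriv f) x) {a b : ℝ} (ha : a ∈ D) (hb : b ∈ D)
    (hab : a < b) :
    f b + deriv f b * (a - b) + σ / 2 * (b - a) ^ 2 ≤ f a := by
  have hslope := (convexOn_sub_half_mul_sq_of_le_deriv2 hD hDc hf hf' hσ).slope_le_of_hasDerivAt
    ha hb hab (hasDerivAt_sub_half_mul_sq (hf.differentiableAt (hD.mem_nhds hb)))
  rw [slope_def_field, div_le_iff₀ (sub_pos.2 hab)] at hslope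
  nlinarith

theorem zero_to_the_left_general (t0 ρ0 σ0 ρ : ℝ) (hσ0 : 0 < σ0)
    (f : ℝ → ℝ) (hf : ContDiffOn ℝ 2 f (Set.Ioo (t0 - ρ0) (t0 + ρ0)))
    (hconv : ∀ x ∈ Set.Ioo (t0 - ρ0) (t0 + ρ0), σ0 ≤ deriv (deriv f) x)
    (v0 : ℝ) (hv0 : |v0 - t0| < ρ0 / 2) (hρlo : 0 < ρ) (hρhi : ρ ≤ ρ0)
    (hflo : -((min σ0 1) ^ 2 * ρ ^ 2 / 256) < f v0) (hfhi : f v0 ≤ 0)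
    (hder : deriv f v0 < 0) :
    ∃ v : ℝ, t0 - ρ0 < v0 - ρ / 8 ∧ v0 - ρ / 8 < v ∧ v ≤ v0 ∧ f v = 0 := by
  obtain ⟨hv0hi, hv0lo⟩ := abs_sub_lt_iff.1 hv0
  have hleft : t0 - ρ0 < v0 - ρ / 8 := by linarith
  have hlt : v0 - ρ / 8 < v0 := by linarith
  have hsub : Icc (v0 - ρ / 8) v0 ⊆ Ioo (t0 - ρ0) (t0 + ρ0) :=
    Icc_subset_Ioo hleft (by linarith)
  have htangent := add_deriv_mul_add_sq_le_of_le_deriv2 isOpen_Ioo (convex_Ioo _ _)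
    (hf.differentiableOn (by norm_num))
    ((hf.deriv_of_isOpen isOpen_Ioo (by norm_num)).differentiableOn one_ne_zero) hconv
    (hsub (left_mem_Icc.2 hlt.le)) (hsub (right_mem_Icc.2 hlt.le)) hlt
  have hσ1 : min σ0 1 ^ 2 ≤ σ0 := by
    nlinarith [min_le_left σ0 1, min_le_right σ0 1, lt_min hσ0 one_pos]
  have hpos : 0 < f (v0 - ρ / 8) := by nlinarith
  obtain ⟨v, ⟨hvl, hvr⟩, hv⟩ :=
    intermediate_value_Ioc' hlt.le (hf.continuousOn.mono hsub) ⟨hfhi, hpos⟩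
  exact ⟨v, hleft, hvl, hvr, hv⟩

/-- Part (3) of the elementary calculus lemma: a zero slightly to the left of a point with
small non-positive value and negative derivative. -/
theorem zero_to_the_left (t0 ρ0 σ0 ρ : ℝ) (hρ0 : 0 < ρ0) (hσ0 : 0 < σ0)
    (f : ℝ → ℝ) (hf : ContDiffOn ℝ 2 f (Set.Ioo (t0 - ρ0) (t0 + ρ0)))
    (hconv : ∀ x ∈ Set.Ioo (t0 - ρ0) (t0 + ρ0), σ0 ≤ deriv (deriv f) x)
    (v0 : ℝ) (hv0 : |v0 - t0| < ρ0 / 2) (hρlo : 0 < ρ) (hρhi : ρ ≤ ρ0)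
    (hflo : -((min σ0 1) ^ 2 * ρ ^ 2 / 256) < f v0) (hfhi : f v0 ≤ 0)
    (hder : deriv f v0 < 0) :
    ∃ v : ℝ, t0 - ρ0 < v0 - ρ / 8 ∧ v0 - ρ / 8 < v ∧ v ≤ v0 ∧ f v = 0 :=
  zero_to_the_left_general t0 ρ0 σ0 ρ hσ0 f hf hconv v0 hv0 hρlo hρhi hflo hfhi hder
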